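/- In any Bakers and Millers diversity game with |R| = |B| = n, the partition into n mixed pairs (each consisting of one red and one blue agent) is both Nash stable and core stable. -/

import Mathlib

open Finset

/-- The red ratio of a finite coalition. -/
def redRatio {α : Type*} (red : α → Prop) [DecidablePred red] (S : Finset α) : ℚ :=
  ((S.filter red).card : ℚ) / (S.card : ℚ)

/-!
Every coalition of the partition has red ratio `1/2`. A red agent joining a mixed pair or
staying alone ends up in a coalition of red ratio `2/3` or `1`, a blue one in red ratio `1/3` or
`0`, so nobody gains by a Nash deviation. A blocking coalition would need its red members to see
a ratio below `1/2` and its blue members one above `1/2`, so it is monochromatic, with ratio `1`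
or `0`, which its members do not prefer to `1/2`.
-/

section RedRatio

variable {α : Type*} (red : α → Prop) [DecidablePred red]

theorem redRatio_eq_half_of_card {S : Finset α} (hS : #S = 2) (hred : #(S.filter red) = 1) :
    redRatio red S = 1 / 2 := by
  simp [redRatio, hS, hred]

theorem redRatio_singleton (i : α) : redRatio red {i} = if red i then 1 else 0 := by
  by_cases hi : red i <;> simp [redRatio, filter_singleton, hi]

theorem exists_mem_not_prefers_redRatio {θ : ℚ} (h0 : 0 ≤ θ) (h1 : θ ≤ 1) {S : Finset α}
    (hS : S.Nonempty) :
    ∃ j ∈ S, ¬ if red j then redRatio red S < θ else θ < redRatio red S := by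
  obtain ⟨i, hi⟩ := hS
  by_cases hmixed : (∃ j ∈ S, red j) ∧ ∃ k ∈ S, ¬ red k
  · obtain ⟨⟨j, hjS, hj⟩, k, hkS, hk⟩ := hmixed
    by_cases hθ : redRatio red S < θ
    · exact ⟨k, hkS, by rw [if_neg hk]; exact hθ.not_gt⟩
    · exact ⟨j, hjS, by rw [if_pos hj]; exact hθ⟩
  · refine ⟨i, hi, ?_⟩
    split_ifs with hred
    · have hall : ∀ k ∈ S, red k := by simpa using fun h => hmixed ⟨⟨i, hi, hred⟩, h⟩
      have hpos : (0 : ℚ) < #S := by exact_mod_cast card_pos.mpr ⟨i, hi⟩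
      rw [redRatio, filter_eq_self.mpr hall, div_self hpos.ne']
      exact h1.not_gt
    · have hnone : ∀ k ∈ S, ¬ red k := fun k hk hk' =>
        hmixed ⟨⟨k, hk, hk'⟩, i, hi, hred⟩
      rw [redRatio, filter_eq_empty_iff.mpr hnone]
      simpa using h0

variable {red} [DecidableEq α]

theorem redRatio_le_redRatio_insert_of_red {i : α} {S : Finset α} (hi : red i) (hiS : i ∉ S) :
    redRatio red S ≤ redRatio red (insert i S) := by
  have hfilter : i ∉ S.filter red := fun h => hiS (mem_of_mem_filter i h)
  have hle : (#(S.filter red) : ℚ) ≤ #S := by exact_mod_cast card_filter_le S red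
  rw [redRatio, redRatio, filter_insert, if_pos hi, card_insert_of_notMem hfilter,
    card_insert_of_notMem hiS]
  push_cast
  rcases S.eq_empty_or_nonempty with rfl | hne
  · norm_num
  · have hpos : (0 : ℚ) < #S := by exact_mod_cast hne.card_pos
    rw [div_le_div_iff₀ hpos (by positivity)]
    linarith

theorem redRatio_insert_le_redRatio_of_not_red {i : α} {S : Finset α} (hi : ¬ red i)
    (hiS : i ∉ S) : redRatio red (insert i S) ≤ redRatio red S := by
  rw [redRatio, redRatio, filter_insert, if_neg hi, card_insert_of_notMem hiS]
  rcases S.eq_empty_or_nonempty with rfl | hne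
  · simp
  · push_cast
    exact div_le_div_of_nonneg_left (by positivity) (by exact_mod_cast hne.card_pos)
      (by linarith)

theorem half_le_redRatio_insert_of_red {i : α} {S : Finset α} (hi : red i) (hiS : i ∉ S)
    (hS : S = ∅ ∨ redRatio red S = 1 / 2) : 1 / 2 ≤ redRatio red (insert i S) := by
  rcases hS with rfl | hS
  · rw [insert_empty, redRatio_singleton, if_pos hi]
    norm_num
  · exact hS ▸ redRatio_le_redRatio_insert_of_red hi hiS

theorem redRatio_insert_le_half_of_not_red {i : α} {S : Finset α} (hi : ¬ red i) (hiS : i ∉ S)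
    (hS : S = ∅ ∨ redRatio red S = 1 / 2) : redRatio red (insert i S) ≤ 1 / 2 := by
  rcases hS with rfl | hS
  · rw [insert_empty, redRatio_singleton, if_neg hi]
    norm_num
  · exact hS ▸ redRatio_insert_le_redRatio_of_not_red hi hiS

end RedRatio

theorem stmt5_general {α : Type*} [DecidableEq α] (red : α → Prop) [DecidablePred red]
    (pref : α → ℚ → ℚ → Prop)
    (hpref : ∀ i (θ θ' : ℚ), pref i θ θ' ↔ (if red i then θ < θ' else θ' < θ))
    (π : Finset (Finset α))
    (hpart : ∀ a : α, ∃! S, S ∈ π ∧ a ∈ S)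
    (hpairs : ∀ S ∈ π, S.card = 2 ∧ (S.filter red).card = 1) :
    -- Nash stability
    (¬ ∃ (i : α) (S : Finset α), (S ∈ π ∨ S = ∅) ∧ i ∉ S ∧
        ∀ T ∈ π, i ∈ T → pref i (redRatio red (insert i S)) (redRatio red T)) ∧
    -- core stability
    (¬ ∃ S : Finset α, S.Nonempty ∧
        ∀ i ∈ S, ∀ T ∈ π, i ∈ T → pref i (redRatio red S) (redRatio red T)) := by
  have hhalf : ∀ T ∈ π, redRatio red T = 1 / 2 := fun T hT =>
    redRatio_eq_half_of_card red (hpairs T hT).1 (hpairs T hT).2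
  have hprefers_half : ∀ i θ, (∀ T ∈ π, i ∈ T → pref i θ (redRatio red T)) →
      if red i then θ < 1 / 2 else 1 / 2 < θ := fun i θ h => by
    obtain ⟨T, ⟨hT, hiT⟩, -⟩ := hpart i
    simpa only [hpref, hhalf T hT] using h T hT hiT
  constructor
  · rintro ⟨i, S, hS, hiS, hdev⟩
    have hS' : S = ∅ ∨ redRatio red S = 1 / 2 := hS.symm.imp id (hhalf S)
    have h := hprefers_half i _ hdev
    split_ifs at h with hi
    · exact (half_le_redRatio_insert_of_red hi hiS hS').not_gt h
    · exact (redRatio_insert_le_half_of_not_red hi hiS hS').not_gt h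
  · rintro ⟨S, hS, hdev⟩
    obtain ⟨j, hjS, hj⟩ :=
      exists_mem_not_prefers_redRatio red (θ := 1 / 2) (by norm_num) (by norm_num) hS
    exact hj (hprefers_half j _ (hdev j hjS))

/-- In any Bakers and Millers diversity game with `|R| = |B| = n`
(each red agent prefers smaller red ratios, each blue agent prefers larger ones),
any partition into `n` mixed pairs is both Nash stable and core stable. -/
theorem stmt5 {α : Type*} [Fintype α] [DecidableEq α] (red : α → Prop) [DecidablePred red]
    (pref : α → ℚ → ℚ → Prop)
    (hpref : ∀ i (θ θ' : ℚ), pref i θ θ' ↔ (if red i then θ < θ' else θ' < θ))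
    (n : ℕ)
    (hR : (univ.filter red).card = n)
    (hB : (univ.filter fun a => ¬ red a).card = n)
    (π : Finset (Finset α))
    (hne : ∀ S ∈ π, S.Nonempty)
    (hpart : ∀ a : α, ∃! S, S ∈ π ∧ a ∈ S)
    (hpairs : ∀ S ∈ π, S.card = 2 ∧ (S.filter red).card = 1) :
    -- Nash stability
    (¬ ∃ (i : α) (S : Finset α), (S ∈ π ∨ S = ∅) ∧ i ∉ S ∧
        ∀ T ∈ π, i ∈ T → pref i (redRatio red (insert i S)) (redRatio red T)) ∧
    -- core stability
    (¬ ∃ S : Finset α, S.Nonempty ∧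
        ∀ i ∈ S, ∀ T ∈ π, i ∈ T → pref i (redRatio red S) (redRatio red T)) :=
  stmt5_general red pref hpref π hpart hpairs
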